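/- Let f : [0,1]^d → ℝ be Hölder continuous of order α ∈ (0,1] with constant λ > 0, i.e., |f(x)−f(y)| ≤ λ‖x−y‖₂^α for all x,y ∈ [0,1]^d. Then for any positive integer N there exist a₁,...,a_N ∈ [0,1/2) such that the FLES network function φ (as in the main theorem) satisfies |φ(x) − f(x)| ≤ 3λ(2√d)^α · 2^{-αN} for all x ∈ [0,1]^d. -/

import Mathlib

/-- σ₃(x) = 1 if the fractional part of x is ≥ 1/2, else 0. -/
noncomputable def sigma3 (x : ℝ) : ℝ := if (1:ℝ)/2 ≤ Int.fract x then 1 else 0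

/-- The unit cube [0,1]^d in Euclidean space. -/
def unitCube (d : ℕ) : Set (EuclideanSpace ℝ (Fin d)) := {x | ∀ i, x i ∈ Set.Icc (0:ℝ) 1}

/-- Modulus of continuity of f on [0,1]^d with respect to the Euclidean norm. -/
noncomputable def modCont (d : ℕ) (f : EuclideanSpace ℝ (Fin d) → ℝ) (r : ℝ) : ℝ :=
  sSup {t | ∃ x ∈ unitCube d, ∃ y ∈ unitCube d, ‖x - y‖ ≤ r ∧ t = |f x - f y|}

/-! The coefficient `a j` stores, for every vertex `k / 2 ^ (N - 1)` of the dyadic grid, the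
`j`-th binary digit of the `N`-bit quantization of `(f (k / 2 ^ (N - 1)) - f 0 + ω) / (2ω)`,
a number in `[0, 1]`, at the binary place `m k + 2`, where `m k = ∑ i, k i * 2 ^ (i N)` is
injective. For `x` in the cell of `k`, multiplying `a j` by `2 ^ (1 + m k)` brings that digit to
the first fractional place, followed only by distinct later places summing to less than `1 / 2`,
so `σ₃` reads it off. Thus `φ x` is `f` at the vertex up to the quantization error `2ω / 2 ^ N`;
the vertex is within `2√d / 2 ^ N` of `x`, and `ω ≤ λ (2√d) ^ α` by the Hölder condition. -/

open Finset

lemma sum_pow_half_lt_two (T : Finset ℕ) : ∑ n ∈ T, (1 / 2 : ℝ) ^ n < 2 := by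
  obtain ⟨M, hM⟩ := T.exists_nat_subset_range
  have hMT : M ∉ T := fun h => by simpa using hM h
  calc ∑ n ∈ T, (1 / 2 : ℝ) ^ n < ∑ n ∈ insert M T, (1 / 2 : ℝ) ^ n := by
        rw [sum_insert hMT]; linarith [pow_pos (by norm_num : (0 : ℝ) < 1 / 2) M]
    _ ≤ ∑' n, (1 / 2 : ℝ) ^ n := summable_geometric_two.sum_le_tsum _ fun _ _ => by positivity
    _ = 2 := tsum_geometric_two

lemma sum_mul_two_zpow_neg_lt_half {ι : Type*} {S : Finset ι} {e : ι → ℤ} (he : Set.InjOn e S)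
    (he2 : ∀ i ∈ S, 2 ≤ e i) {c : ι → ℝ} (hc1 : ∀ i ∈ S, c i ≤ 1) :
    ∑ i ∈ S, c i * (2 : ℝ) ^ (-e i) < 1 / 2 := by
  classical
  have hshift : ∀ i ∈ S, (2 : ℝ) ^ (-e i) = 1 / 4 * (1 / 2) ^ (e i - 2).toNat := by
    intro i hi
    rw [show -e i = -2 - ((e i - 2).toNat : ℤ) by have := he2 i hi; omega,
      zpow_sub₀ two_ne_zero, zpow_natCast]
    norm_num [div_pow, div_eq_mul_inv]
  have hinj : Set.InjOn (fun i => (e i - 2).toNat) S := fun i hi j hj h => by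
    have := he2 i hi; have := he2 j hj
    exact he hi hj (by simp only at h; omega)
  calc ∑ i ∈ S, c i * (2 : ℝ) ^ (-e i) ≤ ∑ i ∈ S, (2 : ℝ) ^ (-e i) :=
        sum_le_sum fun i hi => mul_le_of_le_one_left (by positivity) (hc1 i hi)
    _ = 1 / 4 * ∑ n ∈ S.image fun i => (e i - 2).toNat, (1 / 2 : ℝ) ^ n := by
        rw [sum_image hinj, mul_sum]
        exact sum_congr rfl hshift
    _ < 1 / 4 * 2 := by gcongr; exact sum_pow_half_lt_two _
    _ = 1 / 2 := by norm_num

lemma sigma3_eq_of_eq_intCast_add {x B : ℝ} {b : ℕ} (hb : b ≤ 1) (hB0 : 0 ≤ B) (hB : B < 1 / 2)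
    (z : ℤ) (hx : x = z + (b / 2 + B)) : sigma3 x = b := by
  have hb' : (b : ℝ) ≤ 1 := by exact_mod_cast hb
  rw [sigma3, hx, Int.fract_intCast_add, Int.fract_eq_self.2 ⟨by positivity, by linarith⟩]
  interval_cases b
  · norm_num; linarith
  · simp [hB0]

section BitCode

variable {ι : Type*} [Fintype ι] {m : ι → ℕ} {b : ι → ℕ}

noncomputable def bitCode (m : ι → ℕ) (b : ι → ℕ) : ℝ :=
  ∑ k, (b k : ℝ) * (2 : ℝ) ^ (-((m k : ℤ) + 2))

lemma bitCode_mem_Ico (hm : Function.Injective m) (hb : ∀ k, b k ≤ 1) :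
    bitCode m b ∈ Set.Ico (0 : ℝ) (1 / 2) :=
  ⟨sum_nonneg fun k _ => by positivity,
    sum_mul_two_zpow_neg_lt_half (fun k _ l _ h => hm (by simpa using h)) (fun k _ => by omega)
      (fun k _ => by exact_mod_cast hb k)⟩

lemma sigma3_bitCode_mul_two_zpow (hm : Function.Injective m) (hb : ∀ k, b k ≤ 1) (k₀ : ι) :
    sigma3 (bitCode m b * (2 : ℝ) ^ (1 + (m k₀ : ℤ))) = b k₀ := by
  classical
  set g : ι → ℝ := fun k => (b k : ℝ) * (2 : ℝ) ^ ((m k₀ : ℤ) - 1 - m k)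
  set P := univ.filter fun k => m k < m k₀
  set Q := univ.filter fun k => m k₀ < m k
  have hrest : univ.filter (fun k => ¬ m k < m k₀) = insert k₀ Q := by
    ext k
    simp [Q, le_iff_eq_or_lt, hm.eq_iff, eq_comm]
  have hsplit :
      bitCode m b * (2 : ℝ) ^ (1 + (m k₀ : ℤ)) = ∑ k ∈ P, g k + (g k₀ + ∑ k ∈ Q, g k) := by
    rw [← sum_insert (by simp [Q]), ← hrest, sum_filter_add_sum_filter_not, bitCode, sum_mul]
    refine sum_congr rfl fun k _ => ?_
    rw [mul_assoc, ← zpow_add₀ two_ne_zero]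
    simp only [g]
    ring_nf
  have hP : ∑ k ∈ P, g k = ((∑ k ∈ P, b k * 2 ^ (m k₀ - 1 - m k) : ℕ) : ℝ) := by
    push_cast
    refine sum_congr rfl fun k hk => ?_
    simp only [g]
    have hlt : m k < m k₀ := (mem_filter.1 hk).2
    rw [show (m k₀ : ℤ) - 1 - m k = ((m k₀ - 1 - m k : ℕ) : ℤ) by omega, zpow_natCast]
  have hk₀ : g k₀ = b k₀ / 2 := by
    simp only [g, sub_sub_cancel_left, zpow_neg_one]
    ring
  have hQ : ∑ k ∈ Q, g k = ∑ k ∈ Q, (b k : ℝ) * (2 : ℝ) ^ (-((m k : ℤ) + 1 - m k₀)) :=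
    sum_congr rfl fun k _ => by simp only [g]; ring_nf
  refine sigma3_eq_of_eq_intCast_add (B := ∑ k ∈ Q, g k) (hb k₀)
    (sum_nonneg fun k _ => by simp only [g]; positivity) ?_
    (∑ k ∈ P, b k * 2 ^ (m k₀ - 1 - m k) : ℕ) (by rw [hsplit, hP, hk₀, Int.cast_natCast])
  rw [hQ]
  refine sum_mul_two_zpow_neg_lt_half (fun k _ l _ h => hm (by simpa using h)) (fun k hk => ?_)
    (fun k _ => by exact_mod_cast hb k)
  have := (mem_filter.1 hk).2
  omega

end BitCode

lemma sum_two_zpow_neg_mul_bit_eq {N s : ℕ} (hs : s < 2 ^ N) :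
    ∑ j ∈ Icc 1 N, (2 : ℝ) ^ (-(j : ℤ)) * ((s / 2 ^ (N - j) % 2 : ℕ) : ℝ) = s / 2 ^ N := by
  have hdigits : ∑ i ∈ range N, s / 2 ^ i % 2 * 2 ^ i = s := by
    have := congrArg Fin.val (finFunctionFinEquiv.apply_symm_apply (⟨s, hs⟩ : Fin (2 ^ N)))
    simp only [finFunctionFinEquiv_apply, finFunctionFinEquiv_symm_apply_val] at this
    rwa [Fin.sum_univ_eq_sum_range (fun i => s / 2 ^ i % 2 * 2 ^ i)] at this
  calc ∑ j ∈ Icc 1 N, (2 : ℝ) ^ (-(j : ℤ)) * ((s / 2 ^ (N - j) % 2 : ℕ) : ℝ)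
      = ∑ i ∈ range N, ((s / 2 ^ i % 2 * 2 ^ i : ℕ) : ℝ) / 2 ^ N := by
        refine sum_nbij' (fun j => N - j) (fun i => N - i) ?_ ?_ ?_ ?_ fun j hj => ?_
        · intro j hj; simp only [mem_Icc, mem_range] at hj ⊢; omega
        · intro i hi; simp only [mem_Icc, mem_range] at hi ⊢; omega
        · intro j hj; simp only [mem_Icc] at hj; omega
        · intro i hi; simp only [mem_range] at hi; omega
        rw [mem_Icc] at hj
        rw [zpow_neg, zpow_natCast, Nat.cast_mul, Nat.cast_pow, Nat.cast_ofNat,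
          pow_sub₀ _ two_ne_zero hj.2]
        field_simp
    _ = s / 2 ^ N := by rw [← sum_div, ← Nat.cast_sum, hdigits]

noncomputable def quantize (E : ℕ) (y : ℝ) : ℕ := min ⌊E * y⌋₊ (E - 1)

lemma quantize_lt {E : ℕ} (hE : 0 < E) (y : ℝ) : quantize E y < E := by
  unfold quantize; omega

lemma abs_mul_quantize_div_sub_le {E : ℕ} (hE : 0 < E) {z L : ℝ} (hz0 : 0 ≤ z) (hzL : z ≤ L) :
    |L * quantize E (z / L) / E - z| ≤ L / E := by
  rcases (hz0.trans hzL).eq_or_lt with rfl | hL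
  · simp [le_antisymm hzL hz0]
  set y := z / L
  have hy1 : y ≤ 1 := (div_le_one hL).2 hzL
  have hE' : (0 : ℝ) < E := by exact_mod_cast hE
  have hupper : (quantize E y : ℝ) ≤ E * y :=
    (Nat.cast_le.2 (min_le_left _ _)).trans (Nat.floor_le (by positivity))
  have hlower : E * y - 1 ≤ quantize E y := by
    rcases min_choice ⌊E * y⌋₊ (E - 1) with h | h <;> rw [quantize, h]
    · exact (sub_le_iff_le_add.2 (Nat.lt_floor_add_one _).le)
    · rw [Nat.cast_sub hE, Nat.cast_one]; nlinarith
  have hz : z = L * y := by rw [mul_div_cancel₀ _ hL.ne']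
  rw [hz, show L * quantize E y / E - L * y = L / E * (quantize E y - E * y) by field_simp,
    abs_mul, abs_of_pos (by positivity)]
  exact mul_le_of_le_one_right (by positivity) (abs_le.2 ⟨by linarith, by linarith⟩)

lemma EuclideanSpace.norm_sub_le_sqrt_card_mul {ι : Type*} [Fintype ι]
    {u v : EuclideanSpace ℝ ι} {c : ℝ} (hc : 0 ≤ c) (huv : ∀ i, |u i - v i| ≤ c) :
    ‖u - v‖ ≤ Real.sqrt (Fintype.card ι) * c := by
  rw [EuclideanSpace.norm_eq, ← Real.sqrt_sq hc, ← Real.sqrt_mul (Nat.cast_nonneg _)]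
  refine Real.sqrt_le_sqrt ?_
  calc ∑ i, ‖(u - v) i‖ ^ 2 ≤ ∑ _i : ι, c ^ 2 := sum_le_sum fun i _ => by
        rw [PiLp.sub_apply, Real.norm_eq_abs]
        exact pow_le_pow_left₀ (abs_nonneg _) (huv i) 2
    _ = Fintype.card ι * c ^ 2 := by simp

section UnitCube

variable {d : ℕ}

lemma zero_mem_unitCube : (0 : EuclideanSpace ℝ (Fin d)) ∈ unitCube d := fun _ => by simp

lemma norm_sub_le_sqrt_of_mem_unitCube {u v : EuclideanSpace ℝ (Fin d)} (hu : u ∈ unitCube d)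
    (hv : v ∈ unitCube d) : ‖u - v‖ ≤ Real.sqrt d := by
  simpa using EuclideanSpace.norm_sub_le_sqrt_card_mul zero_le_one fun i =>
    abs_sub_le_of_nonneg_of_le (hu i).1 (hu i).2 (hv i).1 (hv i).2

noncomputable def gridPoint {M : ℕ} (n : ℕ) (k : Fin d → Fin M) : EuclideanSpace ℝ (Fin d) :=
  WithLp.toLp 2 fun i => (k i : ℝ) / 2 ^ n

lemma exists_floor_eq_of_mem_unitCube {x : EuclideanSpace ℝ (Fin d)} (hx : x ∈ unitCube d)
    {n M : ℕ} (hM : 2 ^ n < M) : ∃ k : Fin d → Fin M, ∀ i, ⌊(2 : ℝ) ^ n * x i⌋ = k i := by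
  have hfloor : ∀ i, ⌊(2 : ℝ) ^ n * x i⌋₊ < M := fun i => by
    have : (2 : ℝ) ^ n * x i ≤ 2 ^ n := mul_le_of_le_one_right (by positivity) (hx i).2
    exact lt_of_le_of_lt (Nat.floor_le_of_le (n := 2 ^ n) (by exact_mod_cast this)) hM
  exact ⟨fun i => ⟨_, hfloor i⟩, fun i =>
    (Int.natCast_floor_eq_floor (mul_nonneg (by positivity) (hx i).1)).symm⟩

variable {n M : ℕ} {k : Fin d → Fin M} {x : EuclideanSpace ℝ (Fin d)}

lemma gridPoint_mem_unitCube (hx : x ∈ unitCube d) (hk : ∀ i, ⌊(2 : ℝ) ^ n * x i⌋ = k i) :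
    gridPoint n k ∈ unitCube d := fun i => by
  have hfloor := Int.floor_le ((2 : ℝ) ^ n * x i)
  rw [hk i, Int.cast_natCast] at hfloor
  simp only [gridPoint, PiLp.toLp_apply]
  constructor
  · positivity
  rw [div_le_one (by positivity)]
  nlinarith [(hx i).2, pow_pos (two_pos (α := ℝ)) n]

lemma norm_gridPoint_sub_le (hk : ∀ i, ⌊(2 : ℝ) ^ n * x i⌋ = k i) :
    ‖gridPoint n k - x‖ ≤ Real.sqrt d / 2 ^ n := by
  have hcoord : ∀ i, |gridPoint n k i - x i| ≤ (2 ^ n)⁻¹ := fun i => by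
    have h₁ := Int.floor_le ((2 : ℝ) ^ n * x i)
    have h₂ := Int.lt_floor_add_one ((2 : ℝ) ^ n * x i)
    rw [hk i, Int.cast_natCast] at h₁ h₂
    simp only [gridPoint, PiLp.toLp_apply]
    rw [abs_le, ← one_div]
    constructor
    · rw [neg_le_sub_iff_le_add, ← add_div, le_div_iff₀ (by positivity)]; linarith
    · have : (k i : ℝ) / 2 ^ n ≤ x i := by rw [div_le_iff₀ (by positivity)]; linarith
      linarith [one_div_pos.2 (pow_pos (two_pos (α := ℝ)) n)]
  simpa [div_eq_mul_inv] using EuclideanSpace.norm_sub_le_sqrt_card_mul (by positivity) hcoord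

end UnitCube

section ModulusOfContinuity

variable {d : ℕ} {f : EuclideanSpace ℝ (Fin d) → ℝ} {α lam r : ℝ}

lemma mul_rpow_mem_upperBounds_modCont_set (hα : 0 ≤ α) (hlam : 0 ≤ lam)
    (hf : ∀ x ∈ unitCube d, ∀ y ∈ unitCube d, |f x - f y| ≤ lam * ‖x - y‖ ^ α) :
    lam * r ^ α ∈ upperBounds
      {t | ∃ x ∈ unitCube d, ∃ y ∈ unitCube d, ‖x - y‖ ≤ r ∧ t = |f x - f y|} := by
  rintro _ ⟨x, hx, y, hy, hxy, rfl⟩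
  exact (hf x hx y hy).trans
    (mul_le_mul_of_nonneg_left (Real.rpow_le_rpow (norm_nonneg _) hxy hα) hlam)

lemma abs_sub_le_modCont (hα : 0 ≤ α) (hlam : 0 ≤ lam)
    (hf : ∀ x ∈ unitCube d, ∀ y ∈ unitCube d, |f x - f y| ≤ lam * ‖x - y‖ ^ α)
    {x y : EuclideanSpace ℝ (Fin d)} (hx : x ∈ unitCube d) (hy : y ∈ unitCube d)
    (hxy : ‖x - y‖ ≤ r) : |f x - f y| ≤ modCont d f r :=
  le_csSup ⟨_, mul_rpow_mem_upperBounds_modCont_set hα hlam hf⟩ ⟨x, hx, y, hy, hxy, rfl⟩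

lemma modCont_le_mul_rpow (hα : 0 ≤ α) (hlam : 0 ≤ lam)
    (hf : ∀ x ∈ unitCube d, ∀ y ∈ unitCube d, |f x - f y| ≤ lam * ‖x - y‖ ^ α) (hr : 0 ≤ r) :
    modCont d f r ≤ lam * r ^ α :=
  csSup_le ⟨_, 0, zero_mem_unitCube, 0, zero_mem_unitCube, by simpa using hr, rfl⟩
    (mul_rpow_mem_upperBounds_modCont_set hα hlam hf)

end ModulusOfContinuity

lemma abs_two_mul_quantize_div_add_sub_le {E : ℕ} (hE : 0 < E) {ω a b c : ℝ}
    (hab : |a - b| ≤ ω) :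
    |2 * ω * (quantize E ((a - b + ω) / (2 * ω)) / E) + b - ω - c| ≤ 2 * ω / E + |a - c| := by
  have hz := abs_le.1 hab
  have hq := abs_mul_quantize_div_sub_le hE (z := a - b + ω) (L := 2 * ω) (by linarith)
    (by linarith)
  calc |2 * ω * (quantize E ((a - b + ω) / (2 * ω)) / E) + b - ω - c|
      = |(2 * ω * quantize E ((a - b + ω) / (2 * ω)) / E - (a - b + ω)) + (a - c)| := by
        ring_nf
    _ ≤ 2 * ω / E + |a - c| := (abs_add_le _ _).trans (by gcongr)

lemma add_mul_rpow_le_of_le_div_two_pow {α lam ω D δ : ℝ} (hα : α ∈ Set.Ioc 0 1) (hlam : 0 ≤ lam)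
    (hω : ω ≤ lam * D ^ α) (hδ : 0 ≤ δ) {N : ℕ} (hδD : δ ≤ D / 2 ^ N) :
    2 * ω / 2 ^ N + lam * δ ^ α ≤ 3 * lam * D ^ α * (2 : ℝ) ^ (-(α * N)) := by
  set h : ℝ := (2 ^ N)⁻¹
  have hh : 0 < h := by positivity
  have hpow : (2 : ℝ) ^ (-(α * N)) = h ^ α := by
    rw [Real.inv_rpow (by positivity), ← Real.rpow_natCast, ← Real.rpow_mul zero_le_two,
      Real.rpow_neg zero_le_two, mul_comm]
  have hD : 0 ≤ D := by
    have := hδ.trans hδD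
    rw [div_eq_mul_inv] at this
    exact nonneg_of_mul_nonneg_left this hh
  have hK : 0 ≤ lam * D ^ α := by positivity
  have hh_le : h ≤ h ^ α :=
    Real.self_le_rpow_of_le_one hh.le (inv_le_one_of_one_le₀ (one_le_pow₀ one_le_two)) hα.2
  have hδα : δ ^ α ≤ D ^ α * h ^ α := by
    rw [← Real.mul_rpow hD hh.le]
    exact Real.rpow_le_rpow hδ hδD hα.1.le
  calc 2 * ω / 2 ^ N + lam * δ ^ α = 2 * ω * h + lam * δ ^ α := by rw [div_eq_mul_inv]
    _ ≤ 2 * (lam * D ^ α) * h ^ α + lam * (D ^ α * h ^ α) := by gcongr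
    _ = 3 * lam * D ^ α * (2 : ℝ) ^ (-(α * N)) := by rw [hpow]; ring

section Fles

variable (d N : ℕ) (f : EuclideanSpace ℝ (Fin d) → ℝ)

noncomputable def gridLevel (k : Fin d → Fin (2 ^ N)) : ℕ :=
  quantize (2 ^ N) ((f (gridPoint (N - 1) k) - f 0 + modCont d f (2 * Real.sqrt d)) /
    (2 * modCont d f (2 * Real.sqrt d)))

noncomputable def flesCoeff (j : ℕ) : ℝ :=
  bitCode (fun k : Fin d → Fin (2 ^ N) => (finFunctionFinEquiv k : ℕ))
    fun k => gridLevel d N f k / 2 ^ (N - j) % 2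

variable {d N f}

lemma injective_val_finFunctionFinEquiv {M : ℕ} :
    Function.Injective fun k : Fin d → Fin M => (finFunctionFinEquiv k : ℕ) :=
  Fin.val_injective.comp finFunctionFinEquiv.injective

lemma flesCoeff_mem_Ico (j : ℕ) : flesCoeff d N f j ∈ Set.Ico (0 : ℝ) (1 / 2) :=
  bitCode_mem_Ico injective_val_finFunctionFinEquiv fun _ => by omega

lemma sum_sigma3_flesCoeff (k : Fin d → Fin (2 ^ N)) :
    ∑ j ∈ Icc 1 N, (2 : ℝ) ^ (-(j : ℤ)) *
        sigma3 (flesCoeff d N f j * (2 : ℝ) ^ (1 + ((finFunctionFinEquiv k : ℕ) : ℤ))) =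
      gridLevel d N f k / 2 ^ N := by
  simp only [flesCoeff]
  rw [sum_congr rfl fun j _ => by
    rw [sigma3_bitCode_mul_two_zpow injective_val_finFunctionFinEquiv fun _ => by omega]]
  exact sum_two_zpow_neg_mul_bit_eq (quantize_lt (by positivity) _)

lemma sum_two_pow_mul_floor_eq {x : EuclideanSpace ℝ (Fin d)} {k : Fin d → Fin (2 ^ N)}
    (hk : ∀ i, ⌊(2 : ℝ) ^ (N - 1) * x i⌋ = k i) :
    ∑ i : Fin d, (2 : ℤ) ^ ((i : ℕ) * N) * ⌊(2 : ℝ) ^ (N - 1) * x i⌋ =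
      ((finFunctionFinEquiv k : ℕ) : ℤ) := by
  rw [finFunctionFinEquiv_apply]
  push_cast
  exact sum_congr rfl fun i _ => by rw [hk, pow_mul', mul_comm]

end Fles

theorem stmt9_general (d : ℕ) (α lam : ℝ) (hα : α ∈ Set.Ioc (0:ℝ) 1)
    (hlam : 0 < lam) (f : EuclideanSpace ℝ (Fin d) → ℝ)
    (hf : ∀ x ∈ unitCube d, ∀ y ∈ unitCube d, |f x - f y| ≤ lam * ‖x - y‖ ^ α)
    (N : ℕ) (hN : 0 < N) :
    ∃ a : ℕ → ℝ, (∀ j, a j ∈ Set.Ico (0:ℝ) (1/2)) ∧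
      ∀ x ∈ unitCube d,
        |(2 * modCont d f (2 * Real.sqrt d) *
            ∑ j ∈ Finset.Icc 1 N, (2:ℝ) ^ (-(j:ℤ)) *
              sigma3 (a j * (2:ℝ) ^
                (1 + ∑ i : Fin d, (2:ℤ) ^ ((i:ℕ) * N) * ⌊(2:ℝ) ^ (N - 1) * x i⌋))
          + f 0 - modCont d f (2 * Real.sqrt d)) - f x|
        ≤ 3 * lam * (2 * Real.sqrt d) ^ α * (2:ℝ) ^ (-(α * N)) := by
  have hsqrt := Real.sqrt_nonneg d
  have hω : ∀ u ∈ unitCube d, ∀ v ∈ unitCube d, |f u - f v| ≤ modCont d f (2 * Real.sqrt d) :=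
    fun u hu v hv => abs_sub_le_modCont hα.1.le hlam.le hf hu hv
      ((norm_sub_le_sqrt_of_mem_unitCube hu hv).trans (by linarith))
  refine ⟨flesCoeff d N f, flesCoeff_mem_Ico, fun x hx => ?_⟩
  obtain ⟨k, hk⟩ := exists_floor_eq_of_mem_unitCube hx
    (Nat.pow_lt_pow_right one_lt_two (Nat.sub_lt hN one_pos))
  have hc := gridPoint_mem_unitCube hx hk
  have hdist : ‖gridPoint (N - 1) k - x‖ ≤ 2 * Real.sqrt d / 2 ^ N := by
    have := norm_gridPoint_sub_le hk
    rwa [← mul_div_mul_left _ _ two_ne_zero, ← pow_succ', show N - 1 + 1 = N by omega] at this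
  rw [sum_two_pow_mul_floor_eq hk, sum_sigma3_flesCoeff]
  calc _ ≤ 2 * modCont d f (2 * Real.sqrt d) / 2 ^ N + |f (gridPoint (N - 1) k) - f x| := by
        have := abs_two_mul_quantize_div_add_sub_le (E := 2 ^ N) (by positivity)
          (c := f x) (hω _ hc 0 zero_mem_unitCube)
        simpa [gridLevel] using this
    _ ≤ 2 * modCont d f (2 * Real.sqrt d) / 2 ^ N + lam * ‖gridPoint (N - 1) k - x‖ ^ α := by
        gcongr; exact hf _ hc x hx
    _ ≤ _ := add_mul_rpow_le_of_le_div_two_pow hα hlam.le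
        (modCont_le_mul_rpow hα.1.le hlam.le hf (by positivity)) (norm_nonneg _) hdist

theorem stmt9 (d : ℕ) (hd : 0 < d) (α lam : ℝ) (hα : α ∈ Set.Ioc (0:ℝ) 1)
    (hlam : 0 < lam) (f : EuclideanSpace ℝ (Fin d) → ℝ)
    (hf : ∀ x ∈ unitCube d, ∀ y ∈ unitCube d, |f x - f y| ≤ lam * ‖x - y‖ ^ α)
    (N : ℕ) (hN : 0 < N) :
    ∃ a : ℕ → ℝ, (∀ j, a j ∈ Set.Ico (0:ℝ) (1/2)) ∧
      ∀ x ∈ unitCube d,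
        |(2 * modCont d f (2 * Real.sqrt d) *
            ∑ j ∈ Finset.Icc 1 N, (2:ℝ) ^ (-(j:ℤ)) *
              sigma3 (a j * (2:ℝ) ^
                (1 + ∑ i : Fin d, (2:ℤ) ^ ((i:ℕ) * N) * ⌊(2:ℝ) ^ (N - 1) * x i⌋))
          + f 0 - modCont d f (2 * Real.sqrt d)) - f x|
        ≤ 3 * lam * (2 * Real.sqrt d) ^ α * (2:ℝ) ^ (-(α * N)) :=
  stmt9_general d α lam hα hlam f hf N hN
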